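/- Let (S_n(i)) be the discrete stick-breaking process on [n] and f : ℕ → ℝ≥0 a function. Then E[∑_{i=0}^{κ_n} f(S_n(i))] = ∑_{ℓ=1}^{n} f(ℓ)/ℓ. -/

import Mathlib

/-!
Given the first block `s`, uniform on `{1, …, n}`, the process restarts on `[n - s]`, so the
expectations `E n` satisfy `n * E n = ∑_{s ≤ n} (f s + E (n - s))` with `E 0 = 0`.
The sums `H n = ∑_{ℓ ≤ n} f ℓ / ℓ` solve this recursion: on the right-hand side, `f ℓ / ℓ`
is counted `ℓ` times through `f ℓ` and `n - ℓ` times through the `H (n - s)` with `s ≤ n - ℓ`.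
-/

open scoped ENNReal NNReal

/-- The discrete stick-breaking process on `[n]`, encoded as a `PMF` on the
lists of successive block sizes. -/
noncomputable def stickBreaking : ℕ → PMF (List ℕ)
  | 0 => PMF.pure []
  | (n + 1) =>
    (PMF.uniformOfFinset ((Finset.Icc 1 (n + 1)).attach)
      (Finset.attach_nonempty_iff.2 ⟨1, by simp⟩)).bind
      fun s => (stickBreaking (n + 1 - s.1)).map (List.cons s.1)
  decreasing_by
    have hs := s.2
    rw [Finset.mem_Icc] at hs
    omega

open Finset

namespace PMF

variable {α β : Type*}

lemma tsum_bind_mul (p : PMF α) (q : α → PMF β) (g : β → ℝ≥0∞) :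
    ∑' b, p.bind q b * g b = ∑' a, p a * ∑' b, q a b * g b := by
  simp only [bind_apply, ← ENNReal.tsum_mul_right, ← ENNReal.tsum_mul_left, mul_assoc]
  exact ENNReal.tsum_comm

lemma tsum_map_mul (p : PMF α) (h : α → β) (g : β → ℝ≥0∞) :
    ∑' b, p.map h b * g b = ∑' a, p a * g (h a) := by
  rw [map, tsum_bind_mul]
  simp [pure_apply]

lemma tsum_uniformOfFinset_mul (s : Finset α) (hs : s.Nonempty) (g : α → ℝ≥0∞) :
    ∑' a, uniformOfFinset s hs a * g a = (#s : ℝ≥0∞)⁻¹ * ∑ a ∈ s, g a := by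
  rw [tsum_eq_sum (s := s) fun a ha => by simp [uniformOfFinset_apply_of_notMem hs ha], mul_sum]
  exact sum_congr rfl fun a ha => by rw [uniformOfFinset_apply_of_mem hs ha]

lemma tsum_mul_const_add (p : PMF α) (c : ℝ≥0∞) (g : α → ℝ≥0∞) :
    ∑' a, p a * (c + g a) = c + ∑' a, p a * g a := by
  simp only [mul_add, ENNReal.tsum_add, ENNReal.tsum_mul_right, tsum_coe, one_mul]

end PMF

theorem Finset.sum_Icc_nsmul_add_sum_Icc_tsub {M : Type*} [AddCommMonoid M] (b : ℕ → M)
    (n : ℕ) :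
    ∑ s ∈ Icc 1 n, (s • b s + ∑ ℓ ∈ Icc 1 (n - s), b ℓ) = n • ∑ ℓ ∈ Icc 1 n, b ℓ := by
  have hswap : ∑ s ∈ Icc 1 n, ∑ ℓ ∈ Icc 1 (n - s), b ℓ = ∑ ℓ ∈ Icc 1 n, (n - ℓ) • b ℓ := by
    rw [sum_comm' (t' := Icc 1 n) (s' := fun ℓ => Icc 1 (n - ℓ)) fun s ℓ => by
      simp only [mem_Icc]; omega]
    simp
  rw [sum_add_distrib, hswap, ← sum_add_distrib, smul_sum]
  refine sum_congr rfl fun ℓ hℓ => ?_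
  rw [← add_nsmul, Nat.add_sub_cancel' (mem_Icc.1 hℓ).2]

lemma tsum_stickBreaking_succ_mul (n : ℕ) (g : List ℕ → ℝ≥0∞) :
    ∑' l, stickBreaking (n + 1) l * g l =
      ((n + 1 : ℕ) : ℝ≥0∞)⁻¹ *
        ∑ s ∈ Icc 1 (n + 1), ∑' l, stickBreaking (n + 1 - s) l * g (s :: l) := by
  rw [stickBreaking, PMF.tsum_bind_mul, PMF.tsum_uniformOfFinset_mul, card_attach, Nat.card_Icc,
    Nat.add_sub_cancel]
  simp only [PMF.tsum_map_mul]
  rw [sum_attach (Icc 1 (n + 1)) fun s => ∑' l, stickBreaking (n + 1 - s) l * g (s :: l)]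

theorem tsum_stickBreaking_mul_sum_map (f : ℕ → ℝ≥0∞) (n : ℕ) :
    ∑' l, stickBreaking n l * (l.map f).sum = ∑ ℓ ∈ Icc 1 n, f ℓ / ℓ := by
  induction n using Nat.strong_induction_on with
  | _ n ih =>
    rcases n with _ | m
    · simp [stickBreaking]
    have hstep : ∀ s ∈ Icc 1 (m + 1),
        ∑' l, stickBreaking (m + 1 - s) l * ((s :: l).map f).sum =
          s • (f s / s) + ∑ ℓ ∈ Icc 1 (m + 1 - s), f ℓ / ℓ := fun s hs => by
      obtain ⟨hs1, hsm⟩ := mem_Icc.1 hs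
      have hs0 : (s : ℝ≥0∞) ≠ 0 := by exact_mod_cast (by omega : s ≠ 0)
      simp only [List.map_cons, List.sum_cons]
      rw [PMF.tsum_mul_const_add, ih _ (by omega),
        nsmul_eq_mul, ENNReal.mul_div_cancel hs0 (ENNReal.natCast_ne_top s)]
    rw [tsum_stickBreaking_succ_mul, sum_congr rfl hstep, sum_Icc_nsmul_add_sum_Icc_tsub,
      nsmul_eq_mul, ← mul_assoc, ENNReal.inv_mul_cancel (by simp) (ENNReal.natCast_ne_top _),
      one_mul]

theorem stmt_8_general (n : ℕ) (f : ℕ → ℝ≥0) :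
    ∑' l : List ℕ, stickBreaking n l * (l.map fun s => (f s : ℝ≥0∞)).sum =
      ∑ ℓ ∈ Finset.Icc 1 n, (f ℓ : ℝ≥0∞) / ℓ :=
  tsum_stickBreaking_mul_sum_map _ n

/-- For the discrete stick-breaking process `(S_n(i))_{0 ≤ i ≤ κ_n}` on `[n]`
and any `f : ℕ → ℝ≥0`, `E[∑_{i=0}^{κ_n} f(S_n(i))] = ∑_{ℓ=1}^n f(ℓ)/ℓ`. -/
theorem stmt_8 (n : ℕ) (hn : 1 ≤ n) (f : ℕ → ℝ≥0) :
    ∑' l : List ℕ, stickBreaking n l * (l.map fun s => (f s : ℝ≥0∞)).sum =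
      ∑ ℓ ∈ Finset.Icc 1 n, (f ℓ : ℝ≥0∞) / ℓ :=
  stmt_8_general n f
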